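/- If τ₁, τ₂ ∈ T satisfy τ₁(v) = τ₂(v) for every vertex v belonging to a nontrivial cluster, then τ₁ can be transformed into τ₂ by a sequence of at most Σ_{v ∈ V} |τ₁(v) − τ₂(v)| Z-transformations; that is, the distance between τ₁ and τ₂ in the Z-transformation graph on T is at most Σ_{v ∈ V} |τ₁(v) − τ₂(v)|. -/

import Mathlib

/-- A directed walk from `a` to `b` along edge relation `E`, recorded as the list of its
vertices. -/
def IsWalk {V : Type*} (E : V → V → Prop) (a b : V) (l : List V) : Prop :=
  l.head? = some a ∧ l.getLast? = some b ∧ l.Chain' E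

/-- The total weight of a walk. -/
def walkWeight {V : Type*} (δ : V → V → ℤ) (l : List V) : ℤ :=
  ((l.zip l.tail).map fun p => δ p.1 p.2).sum

/-- A negative cycle: a directed walk from some vertex to itself with at least one edge
and negative total weight. -/
def HasNegCycle {V : Type*} (E : V → V → Prop) (δ : V → V → ℤ) : Prop :=
  ∃ (a : V) (l : List V), IsWalk E a a l ∧ 2 ≤ l.length ∧ walkWeight δ l < 0

/-- The set `T` of admissible integer-valued functions normalized to vanish at `f₀`. -/
def Tset {V : Type*} (E : V → V → Prop) (δ : V → V → ℤ) (f₀ : V) : Set (V → ℤ) :=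
  {τ | (∀ v w, E v w → τ w - τ v ≤ δ v w) ∧ τ f₀ = 0}

/-- Two elements of `T` differ by a `Z`-transformation if they agree at every vertex except
exactly one, where they differ by exactly `1`. -/
def ZRel {V : Type*} (T : Set (V → ℤ)) (τ σ : V → ℤ) : Prop :=
  τ ∈ T ∧ σ ∈ T ∧ ∃ v, (∀ w, w ≠ v → σ w = τ w) ∧ (σ v = τ v + 1 ∨ σ v = τ v - 1)

/-!
Induct on the ℓ¹ distance. Where `τ₂ < τ₁` somewhere (otherwise exchange the roles of `τ₁` and
`τ₂` and reverse the path), compare `σ = τ₁ ⊓ τ₂ ≤ τ₁`. A vertex with `σ v < τ₁ v` all of whose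
edges to other vertices are strict for `τ₁` can be lowered by one. If there were none, tight
edges out of `{σ < τ₁}` would stay inside it (`σ` is admissible), so they close a cycle. Every
walk from `v` to `w` weighs at least `τ₁ w - τ₁ v`, with equality along tight edges, so the cycle
lies in a nontrivial cluster, where `τ₁ = τ₂` by hypothesis.
-/

open Function Relation

theorem Finite.exists_transGen_self {α : Type*} [Finite α] {r : α → α → Prop} {s : Set α}
    (hs : s.Nonempty) (h : ∀ a ∈ s, ∃ b ∈ s, r a b) : ∃ a ∈ s, TransGen r a a := by
  by_contra! hno
  let r' : α → α → Prop := fun a b => a ∈ s ∧ r a b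
  have hirr : ∀ a, ¬TransGen r' a a := fun a ha => by
    obtain ⟨b, ⟨has, -⟩, -⟩ := TransGen.head'_iff.mp ha
    exact hno a has (TransGen.mono (fun _ _ hab => hab.2) a a ha)
  have : IsTrans α (flip (TransGen r')) := ⟨fun _ _ _ hab hbc => TransGen.trans hbc hab⟩
  have : Std.Irrefl (flip (TransGen r')) := ⟨hirr⟩
  obtain ⟨a, has, hmin⟩ := (Finite.wellFounded_of_trans_of_irrefl (flip (TransGen r'))).has_min s hs
  obtain ⟨b, hbs, hab⟩ := h a has
  exact hmin b hbs (TransGen.single ⟨has, hab⟩)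

section Potentials

variable {V : Type*} {E : V → V → Prop} {δ : V → V → ℤ}

def Admissible (E : V → V → Prop) (δ : V → V → ℤ) (τ : V → ℤ) : Prop :=
  ∀ v w, E v w → τ w - τ v ≤ δ v w

def IsTight (E : V → V → Prop) (δ : V → V → ℤ) (τ : V → ℤ) (v w : V) : Prop :=
  E v w ∧ τ w - τ v = δ v w

def IsMinWalkWeight (E : V → V → Prop) (δ : V → V → ℤ) (D : V → V → ℤ) : Prop :=
  ∀ v w, IsLeast {x : ℤ | ∃ l : List V, IsWalk E v w l ∧ walkWeight δ l = x} (D v w)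

def InNontrivialCluster (D : V → V → ℤ) (v : V) : Prop :=
  ∃ w, w ≠ v ∧ D v w + D w v = 0

theorem walkWeight_singleton (a : V) : walkWeight δ [a] = 0 := by
  simp [walkWeight]

theorem walkWeight_cons_cons (a b : V) (l : List V) :
    walkWeight δ (a :: b :: l) = δ a b + walkWeight δ (b :: l) := by
  simp [walkWeight]

theorem isWalk_singleton (a : V) : IsWalk E a a [a] :=
  ⟨rfl, rfl, List.isChain_singleton a⟩

theorem isWalk_cons_cons {a b c : V} {l : List V} :
    IsWalk E a c (a :: b :: l) ↔ E a b ∧ IsWalk E b c (b :: l) := by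
  unfold IsWalk
  rw [List.getLast?_cons_cons]
  constructor
  · rintro ⟨-, hc, hch⟩
    exact ⟨(List.isChain_cons_cons.mp hch).1, rfl, hc, (List.isChain_cons_cons.mp hch).2⟩
  · rintro ⟨hab, -, hc, hch⟩
    exact ⟨rfl, hc, List.isChain_cons_cons.mpr ⟨hab, hch⟩⟩

theorem IsWalk.sub_le_walkWeight {τ : V → ℤ} (hτ : Admissible E δ τ) {b : V} :
    ∀ {a : V} {l : List V}, IsWalk E a b l → τ b - τ a ≤ walkWeight δ l
  | _, [], h => by simp [IsWalk] at h
  | a, [x], h => by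
    obtain ⟨rfl, rfl, -⟩ := (by simpa [IsWalk] using h : x = a ∧ x = b ∧ _)
    simp [walkWeight_singleton]
  | a, x :: y :: l, h => by
    obtain rfl : x = a := by simpa [IsWalk] using h.1
    obtain ⟨hxy, hy⟩ := isWalk_cons_cons.mp h
    have := hτ x y hxy
    have := hy.sub_le_walkWeight hτ
    rw [walkWeight_cons_cons]
    omega

theorem exists_walk_of_reflTransGen_isTight {τ : V → ℤ} {a b : V}
    (h : ReflTransGen (IsTight E δ τ) a b) :
    ∃ l, IsWalk E a b l ∧ walkWeight δ l = τ b - τ a := by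
  induction h using ReflTransGen.head_induction_on with
  | refl => exact ⟨[b], isWalk_singleton b, by simp [walkWeight_singleton]⟩
  | @head a c hac _ ih =>
    obtain ⟨l, hl, hw⟩ := ih
    obtain ⟨t, rfl⟩ := List.head?_eq_some_iff.mp hl.1
    refine ⟨a :: c :: t, isWalk_cons_cons.mpr ⟨hac.1, hl⟩, ?_⟩
    rw [walkWeight_cons_cons, hw, ← hac.2]
    ring

section MinWalkWeight

variable {D : V → V → ℤ} (hD : IsMinWalkWeight E δ D)
include hD

theorem IsMinWalkWeight.sub_le {τ : V → ℤ} (hτ : Admissible E δ τ) (v w : V) :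
    τ w - τ v ≤ D v w := by
  obtain ⟨l, hl, hw⟩ := (hD v w).1
  exact hw ▸ hl.sub_le_walkWeight hτ

theorem IsMinWalkWeight.add_eq_zero_of_isTight {τ : V → ℤ} (hτ : Admissible E δ τ) {v w : V}
    (hvw : ReflTransGen (IsTight E δ τ) v w) (hwv : ReflTransGen (IsTight E δ τ) w v) :
    D v w + D w v = 0 := by
  obtain ⟨l, hl, hlw⟩ := exists_walk_of_reflTransGen_isTight hvw
  obtain ⟨l', hl', hlw'⟩ := exists_walk_of_reflTransGen_isTight hwv
  have := (hD v w).2 ⟨l, hl, rfl⟩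
  have := (hD w v).2 ⟨l', hl', rfl⟩
  have := hD.sub_le hτ v w
  have := hD.sub_le hτ w v
  omega

end MinWalkWeight

theorem Admissible.inf {τ σ : V → ℤ} (hτ : Admissible E δ τ) (hσ : Admissible E δ σ) :
    Admissible E δ (τ ⊓ σ) := fun v w hvw => by
  have := hτ v w hvw
  have := hσ v w hvw
  simp only [Pi.inf_apply]
  omega

theorem Admissible.update_sub_one [DecidableEq V] {τ : V → ℤ} (hτ : Admissible E δ τ) {v : V}
    (hv : ∀ w, E v w → w ≠ v → τ w - τ v < δ v w) :
    Admissible E δ (update τ v (τ v - 1)) := fun a b hab => by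
  have := hτ a b hab
  rcases eq_or_ne a v with rfl | ha <;> rcases eq_or_ne b a with rfl | hb
  · simpa using this
  · have := hv b hab hb
    simp only [update_self, update_of_ne hb]
    omega
  · simp only [update_of_ne ha]
    omega
  · rcases eq_or_ne b v with rfl | hbv
    · simp only [update_self, update_of_ne ha]
      omega
    · simpa [update_of_ne ha, update_of_ne hbv] using this

/-- Otherwise every vertex where `σ < τ` has a `τ`-tight edge to another such vertex, and a cycle
of tight edges lies in a single nontrivial cluster. -/
theorem IsMinWalkWeight.exists_lowerable [Finite V] {D : V → V → ℤ} (hD : IsMinWalkWeight E δ D)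
    {σ τ : V → ℤ} (hσ : Admissible E δ σ) (hτ : Admissible E δ τ) (hle : σ ≤ τ)
    (hcl : ∀ v, σ v < τ v → ¬InNontrivialCluster D v) {v₀ : V} (hv₀ : σ v₀ < τ v₀) :
    ∃ v, σ v < τ v ∧ ∀ w, E v w → w ≠ v → τ w - τ v < δ v w := by
  by_contra! hno
  let R : V → V → Prop := fun a b => b ≠ a ∧ IsTight E δ τ a b
  have hsucc : ∀ a, σ a < τ a → ∃ b, σ b < τ b ∧ R a b := by
    intro a ha
    obtain ⟨b, hab, hba, hδ⟩ := hno a ha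
    have htight : τ b - τ a = δ a b := le_antisymm (hτ a b hab) hδ
    have := hσ a b hab
    have := hle b
    exact ⟨b, by omega, hba, hab, htight⟩
  obtain ⟨a, ha, hcyc⟩ := Finite.exists_transGen_self (s := {v | σ v < τ v}) ⟨v₀, hv₀⟩ hsucc
  obtain ⟨b, ⟨hba, hab⟩, hback⟩ := TransGen.head'_iff.mp hcyc
  have hzero := hD.add_eq_zero_of_isTight hτ (ReflTransGen.single hab)
    (ReflTransGen.mono (fun _ _ h => h.2) _ _ hback)
  exact hcl a ha ⟨b, hba, hzero⟩

section L1Dist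

variable [Fintype V]

def l1Dist (τ σ : V → ℤ) : ℕ :=
  ∑ v, (τ v - σ v).natAbs

theorem l1Dist_comm (τ σ : V → ℤ) : l1Dist τ σ = l1Dist σ τ :=
  Finset.sum_congr rfl fun v _ => by rw [← Int.natAbs_neg, neg_sub]

theorem l1Dist_eq_zero_iff {τ σ : V → ℤ} : l1Dist τ σ = 0 ↔ τ = σ := by
  simp [l1Dist, Finset.sum_eq_zero_iff, sub_eq_zero, funext_iff]

theorem l1Dist_update_sub_one [DecidableEq V] {τ σ : V → ℤ} {v : V} (hv : σ v < τ v) :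
    l1Dist (update τ v (τ v - 1)) σ + 1 = l1Dist τ σ := by
  unfold l1Dist
  rw [← Finset.add_sum_erase _ _ (Finset.mem_univ v),
    ← Finset.add_sum_erase _ _ (Finset.mem_univ v), Finset.sum_congr rfl fun u hu => by rw [update_of_ne (Finset.ne_of_mem_erase hu)], update_self]
  omega

end L1Dist

def zGraph (T : Set (V → ℤ)) : SimpleGraph (V → ℤ) where
  Adj := ZRel T
  symm := ⟨fun _ _ ⟨hτ, hσ, v, hw, hv⟩ => ⟨hσ, hτ, v, fun w hw' => (hw w hw').symm, by omega⟩⟩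
  loopless := ⟨fun _ ⟨_, _, _, _, hv⟩ => by omega⟩

@[simp]
theorem zGraph_adj {T : Set (V → ℤ)} {τ σ : V → ℤ} : (zGraph T).Adj τ σ ↔ ZRel T τ σ :=
  Iff.rfl

section Transformations

variable [Fintype V] {D : V → V → ℤ} (hD : IsMinWalkWeight E δ D) {f₀ : V} {τ₁ τ₂ : V → ℤ}
  (h₁ : τ₁ ∈ Tset E δ f₀) (h₂ : τ₂ ∈ Tset E δ f₀)
  (hagree : ∀ v, InNontrivialCluster D v → τ₁ v = τ₂ v)
include hD h₁ h₂ hagree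

theorem IsMinWalkWeight.exists_zGraph_adj_l1Dist_succ {v₀ : V} (hv₀ : τ₂ v₀ < τ₁ v₀) :
    ∃ τ, (zGraph (Tset E δ f₀)).Adj τ₁ τ ∧ (∀ v, InNontrivialCluster D v → τ v = τ₂ v) ∧
      l1Dist τ τ₂ + 1 = l1Dist τ₁ τ₂ := by
  classical
  have hinf : ∀ v, (τ₁ ⊓ τ₂) v < τ₁ v ↔ τ₂ v < τ₁ v := fun v => by
    simp only [Pi.inf_apply]
    omega
  obtain ⟨v, hv, hloose⟩ := hD.exists_lowerable (Admissible.inf h₁.1 h₂.1) h₁.1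
    (fun _ => inf_le_left) (fun v hv hcl => ((hinf v).mp hv).ne' (hagree v hcl)) ((hinf v₀).mpr hv₀)
  replace hv := (hinf v).mp hv
  have hvf₀ : f₀ ≠ v := by
    rintro rfl
    rw [h₁.2, h₂.2] at hv
    exact lt_irrefl 0 hv
  have hτ : update τ₁ v (τ₁ v - 1) ∈ Tset E δ f₀ :=
    ⟨Admissible.update_sub_one h₁.1 hloose, by rw [update_of_ne hvf₀]; exact h₁.2⟩
  refine ⟨_, zGraph_adj.mpr ⟨h₁, hτ, v, fun w hw => update_of_ne hw _ _,
    Or.inr (update_self _ _ _)⟩, fun u hu => ?_, l1Dist_update_sub_one hv⟩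
  have := hagree u hu
  rw [update_of_ne (by rintro rfl; omega)]
  exact this

theorem IsMinWalkWeight.exists_walk_length_le_l1Dist :
    ∃ p : (zGraph (Tset E δ f₀)).Walk τ₁ τ₂, p.length ≤ l1Dist τ₁ τ₂ := by
  obtain ⟨n, hn⟩ : ∃ n, l1Dist τ₁ τ₂ = n := ⟨_, rfl⟩
  induction n generalizing τ₁ τ₂ with
  | zero =>
    obtain rfl := l1Dist_eq_zero_iff.mp hn
    exact ⟨.nil, by simp⟩
  | succ n ih =>
    obtain ⟨v, hv⟩ : ∃ v, τ₁ v ≠ τ₂ v :=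
      Function.ne_iff.mp fun h => by simp [l1Dist_eq_zero_iff.mpr h] at hn
    rcases hv.lt_or_gt with hlt | hgt
    · obtain ⟨τ, hadj, hagree', hdist⟩ :=
        hD.exists_zGraph_adj_l1Dist_succ h₂ h₁ (fun u hu => (hagree u hu).symm) hlt
      have hn' : l1Dist τ₁ τ = n := by
        rw [l1Dist_comm] at hn ⊢
        omega
      obtain ⟨p, hp⟩ := ih h₁ (zGraph_adj.mp hadj).2.1 (fun u hu => (hagree' u hu).symm) hn'
      exact ⟨p.concat hadj.symm, by simp; omega⟩
    · obtain ⟨τ, hadj, hagree', hdist⟩ := hD.exists_zGraph_adj_l1Dist_succ h₁ h₂ hagree hgt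
      obtain ⟨p, hp⟩ := ih (zGraph_adj.mp hadj).2.1 h₂ hagree' (by omega)
      exact ⟨.cons hadj p, by simp; omega⟩

end Transformations

end Potentials

theorem zGraph_distance_le_l1_distance_general
    {V : Type*} [Fintype V] (E : V → V → Prop) (δ : V → V → ℤ)
    (D : V → V → ℤ)
    (hD : ∀ v w, IsLeast {x : ℤ | ∃ l : List V, IsWalk E v w l ∧ walkWeight δ l = x} (D v w))
    (f₀ : V) (τ₁ τ₂ : V → ℤ)
    (h₁ : τ₁ ∈ Tset E δ f₀) (h₂ : τ₂ ∈ Tset E δ f₀)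
    (hagree : ∀ v : V, (∃ w, w ≠ v ∧ D v w + D w v = 0) → τ₁ v = τ₂ v) :
    ∃ (N : ℕ) (c : ℕ → V → ℤ),
      (N : ℤ) ≤ ∑ v : V, |τ₁ v - τ₂ v| ∧
      c 0 = τ₁ ∧ c N = τ₂ ∧
      ∀ i < N, ZRel (Tset E δ f₀) (c i) (c (i + 1)) := by
  obtain ⟨p, hp⟩ := IsMinWalkWeight.exists_walk_length_le_l1Dist hD h₁ h₂ hagree
  refine ⟨p.length, p.getVert, ?_, p.getVert_zero, p.getVert_length,
    fun i hi => zGraph_adj.mp (p.adj_getVert_succ hi)⟩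
  calc (p.length : ℤ) ≤ l1Dist τ₁ τ₂ := by exact_mod_cast hp
    _ = ∑ v, |τ₁ v - τ₂ v| := by simp [l1Dist]

/-- If `τ₁, τ₂ ∈ T` agree at every vertex belonging to a nontrivial cluster, then `τ₁` can
be transformed into `τ₂` by at most `Σ_v |τ₁ v - τ₂ v|` `Z`-transformations. -/
theorem zGraph_distance_le_l1_distance
    {V : Type*} [Fintype V] (E : V → V → Prop) (δ : V → V → ℤ)
    (hsymm : ∀ v w, E v w ↔ E w v)
    (hconn : ∀ v w : V, ∃ l : List V, IsWalk E v w l)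
    (hnoneg : ¬ HasNegCycle E δ)
    (D : V → V → ℤ)
    (hD : ∀ v w, IsLeast {x : ℤ | ∃ l : List V, IsWalk E v w l ∧ walkWeight δ l = x} (D v w))
    (f₀ : V) (τ₁ τ₂ : V → ℤ)
    (h₁ : τ₁ ∈ Tset E δ f₀) (h₂ : τ₂ ∈ Tset E δ f₀)
    (hagree : ∀ v : V, (∃ w, w ≠ v ∧ D v w + D w v = 0) → τ₁ v = τ₂ v) :
    ∃ (N : ℕ) (c : ℕ → V → ℤ),
      (N : ℤ) ≤ ∑ v : V, |τ₁ v - τ₂ v| ∧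
      c 0 = τ₁ ∧ c N = τ₂ ∧
      ∀ i < N, ZRel (Tset E δ f₀) (c i) (c (i + 1)) :=
  zGraph_distance_le_l1_distance_general E δ D hD f₀ τ₁ τ₂ h₁ h₂ hagree
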